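/- With E = ⊕_i (L_i ⊕ L_i^⊥) ⊕ G^{β_k}, the map Φ* sending tuples (A_1,...,A_k) with A_i : L_i → Σ_{j=i+1}^{k+1} L_j^⊥ (where L_{k+1}^⊥ := G^{β_k}) to L := Σ_{i=1}^k Γ_{A_i} satisfies: L ∩ G^{β_i} = Σ_{j=i+1}^k Γ_{A_j} for i ≤ k-1, and L ∩ G^{β_k} = {0}, where G^{β_i} := Σ_{j=i+1}^k (L_j + L_j^⊥) + G^{β_k}. In particular dim(L ∩ G^{β_i}) = k - i for all i. -/

import Mathlib

/-!
Let `π_b` be the projections of the decomposition `E = ⊕ L_j ⊕ ⊕ L_j^⊥ ⊕ G^{β_k}` and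
`N = ∑_l A_l ∘ π_{L_l}`. As `N` takes values in `⊕ L_j^⊥ ⊕ G^{β_k}`, on which it vanishes,
`N² = 0`, so `Φ = id + N` is injective with inverse `id - N`. It maps each `L_j` onto the graph
`Γ_{A_j}`, and since `A_l` only reaches the summands beyond `L_l`, it maps each `G^{β_i}` onto
itself. Hence `L ∩ G^{β_i} = Φ ((⊕_j L_j) ∩ G^{β_i}) = Φ (⊕_{j ≥ i} L_j)`, which reduces both
claims to the coordinate case `A = 0`.
-/

namespace DirectSum.IsInternal

variable {R E ι : Type*} [Semiring R] [AddCommMonoid E] [Module R E] [DecidableEq ι]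
  {M : ι → Submodule R E} (h : IsInternal M)

noncomputable def proj (a : ι) : E →ₗ[R] E :=
  (M a).subtype ∘ₗ component R ι (fun i => M i) a ∘ₗ
    (LinearEquiv.ofBijective (coeLinearMap M) h).symm.toLinearMap

theorem proj_mem (a : ι) (x : E) : h.proj a x ∈ M a := by
  simp [proj]

theorem proj_of_mem {a : ι} {x : E} (hx : x ∈ M a) : h.proj a x = x := by
  simp [proj, ← apply_eq_component, h.ofBijective_coeLinearMap_of_mem hx]

theorem proj_of_mem_ne {a b : ι} {x : E} (hx : x ∈ M b) (hba : b ≠ a) : h.proj a x = 0 := by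
  simp [proj, ← apply_eq_component, h.ofBijective_coeLinearMap_of_mem_ne hba hx]

theorem sum_proj [Fintype ι] (x : E) : ∑ a, h.proj a x = x := by
  set e := LinearEquiv.ofBijective (coeLinearMap M) h
  calc ∑ a, h.proj a x = coeLinearMap M (∑ a, of (fun i => M i) a (e.symm x a)) := by
        simp [proj, e, ← apply_eq_component, map_sum, coeLinearMap_of]
    _ = x := by rw [sum_univ_of]; exact e.apply_symm_apply x

theorem proj_eq_zero_of_mem_biSup {s : Set ι} {a : ι} (ha : a ∉ s) {x : E}
    (hx : x ∈ ⨆ b ∈ s, M b) : h.proj a x = 0 := by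
  refine (iSup₂_le fun b hb y hy => ?_ : (⨆ b ∈ s, M b) ≤ LinearMap.ker (h.proj a)) hx
  exact h.proj_of_mem_ne hy (ne_of_mem_of_not_mem hb ha)

theorem mem_biSup_iff [Fintype ι] {s : Set ι} {x : E} :
    x ∈ ⨆ b ∈ s, M b ↔ ∀ a ∉ s, h.proj a x = 0 := by
  refine ⟨fun hx a ha => h.proj_eq_zero_of_mem_biSup ha hx, fun hx => ?_⟩
  rw [← h.sum_proj x]
  refine Submodule.sum_mem _ fun a _ => ?_
  by_cases ha : a ∈ s
  · exact (le_biSup M ha) (h.proj_mem a x)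
  · simp [hx a ha]

theorem biSup_inf_biSup [Fintype ι] (h : IsInternal M) (s t : Set ι) :
    (⨆ b ∈ s, M b) ⊓ (⨆ b ∈ t, M b) = ⨆ b ∈ s ∩ t, M b := by
  refine le_antisymm (fun x hx => ?_) (le_inf (biSup_mono fun _ => And.left)
    (biSup_mono fun _ => And.right))
  rw [Submodule.mem_inf, h.mem_biSup_iff, h.mem_biSup_iff] at hx
  rw [h.mem_biSup_iff]
  intro a ha
  by_cases has : a ∈ s
  · exact hx.2 a fun hat => ha ⟨has, hat⟩
  · exact hx.1 a has

end DirectSum.IsInternal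

theorem iSupIndep.finrank_biSup {ι K V : Type*} [DivisionRing K] [AddCommGroup V] [Module K V]
    [FiniteDimensional K V] {M : ι → Submodule K V} (hM : iSupIndep M) (s : Finset ι) :
    Module.finrank K ↥(⨆ i ∈ s, M i) = ∑ i ∈ s, Module.finrank K (M i) := by
  classical
  induction s using Finset.induction_on with
  | empty => simp
  | insert a s has ih =>
    have hdisj : Disjoint (M a) (⨆ i ∈ s, M i) := hM.disjoint_biSup (by simpa using has)
    rw [Finset.iSup_insert, Finset.sum_insert has, ← ih, ← add_zero (Module.finrank K _),
      ← finrank_bot K V, ← hdisj.eq_bot, Submodule.finrank_sup_add_finrank_inf_eq]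

namespace LinearMap

variable {R E : Type*} [Ring R] [AddCommGroup E] [Module R E] {N : E →ₗ[R] E}

theorem injective_id_add_of_comp_self_eq_zero (hN : N ∘ₗ N = 0) :
    Function.Injective (LinearMap.id + N : E →ₗ[R] E) := by
  refine (injective_iff_map_eq_zero _).2 fun x hx => ?_
  have hx' : x = -N x := eq_neg_of_add_eq_zero_left hx
  have hNx : N x = 0 := by
    have hNN : N (N x) = 0 := by simpa using LinearMap.congr_fun hN x
    simpa [hNN] using congrArg N hx'
  rw [hx', hNx, neg_zero]

theorem map_id_add_eq_of_comp_self_eq_zero (hN : N ∘ₗ N = 0) {G : Submodule R E}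
    (hG : ∀ x ∈ G, N x ∈ G) : G.map (LinearMap.id + N : E →ₗ[R] E) = G := by
  refine le_antisymm (Submodule.map_le_iff_le_comap.2 fun x hx => add_mem hx (hG x hx))
    fun y hy => ⟨y - N y, sub_mem hy (hG y hy), ?_⟩
  have hNN : N (N y) = 0 := by simpa using LinearMap.congr_fun hN y
  simp [hNN]

end LinearMap

/-- Under the indexing `Sum.inl j ↦ L_j`, `Sum.inr j.castSucc ↦ L_j^⊥`,
`Sum.inr (Fin.last k) ↦ G^{β_k}`, the summands of `G^{β_i}`. -/
def blocksFrom (k i : ℕ) : Set (Fin k ⊕ Fin (k + 1)) := {b | i ≤ Sum.elim Fin.val Fin.val b}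

section Graphs

open DirectSum

variable {K E : Type*} [Field K] [AddCommGroup E] [Module K E] {k : ℕ}
  {L : Fin k → Submodule K E} {Lp : Fin (k + 1) → Submodule K E}

theorem iSup_blocksFrom {i : ℕ} (hik : i ≤ k) :
    (⨆ j : Fin k, ⨆ _ : i ≤ (j : ℕ), (L j ⊔ Lp j.castSucc)) ⊔ Lp (Fin.last k) =
      ⨆ b ∈ blocksFrom k i, Sum.elim L Lp b := by
  refine le_antisymm (sup_le (iSup₂_le fun j hj => sup_le ?_ ?_) ?_) (iSup₂_le ?_)
  · exact le_biSup (Sum.elim L Lp) (show Sum.inl j ∈ blocksFrom k i from hj)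
  · exact le_biSup (Sum.elim L Lp) (show Sum.inr j.castSucc ∈ blocksFrom k i from hj)
  · exact le_biSup (Sum.elim L Lp) (show Sum.inr (Fin.last k) ∈ blocksFrom k i from hik)
  have hle (j : Fin k) (hj : i ≤ (j : ℕ)) : L j ⊔ Lp j.castSucc ≤
      (⨆ j : Fin k, ⨆ _ : i ≤ (j : ℕ), (L j ⊔ Lp j.castSucc)) ⊔ Lp (Fin.last k) :=
    (le_iSup₂_of_le (f := fun j _ => L j ⊔ Lp j.castSucc) j hj le_rfl).trans le_sup_left
  rintro (j | p) hb
  · exact le_sup_left.trans (hle j hb)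
  · induction p using Fin.lastCases with
    | last => exact le_sup_right
    | cast j => exact le_sup_right.trans (hle j hb)

theorem iSup_inf_iSup_blocksFrom (hInt : IsInternal (Sum.elim L Lp)) {i : ℕ} (hik : i ≤ k) :
    (⨆ j, L j) ⊓ ((⨆ j : Fin k, ⨆ _ : i ≤ (j : ℕ), (L j ⊔ Lp j.castSucc)) ⊔ Lp (Fin.last k)) =
      ⨆ j : Fin k, ⨆ _ : i ≤ (j : ℕ), L j := by
  have hL : ⨆ j, L j = ⨆ b ∈ Set.range Sum.inl, Sum.elim L Lp b := by
    rw [iSup_range]; rfl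
  have hLi : ⨆ j : Fin k, ⨆ _ : i ≤ (j : ℕ), L j =
      ⨆ b ∈ Sum.inl '' {j : Fin k | i ≤ j}, Sum.elim L Lp b := by
    rw [iSup_image]; rfl
  have hset : Set.range Sum.inl ∩ blocksFrom k i = Sum.inl '' {j : Fin k | i ≤ j} := by
    ext (j | p) <;> simp [blocksFrom]
  rw [iSup_blocksFrom hik, hL, hLi, hInt.biSup_inf_biSup, hset]

theorem finrank_iSup_ge [FiniteDimensional K E] (hInt : IsInternal (Sum.elim L Lp))
    (hL1 : ∀ i, Module.finrank K (L i) = 1)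
    (i : ℕ) : Module.finrank K ↥(⨆ j : Fin k, ⨆ _ : i ≤ (j : ℕ), L j) = k - i := by
  have hindep : iSupIndep L := hInt.submodule_iSupIndep.comp Sum.inl_injective
  have hfilter : ⨆ j : Fin k, ⨆ _ : i ≤ (j : ℕ), L j =
      ⨆ j ∈ ({j : Fin k | i ≤ (j : ℕ)} : Finset (Fin k)), L j := by
    simp
  rw [hfilter, hindep.finrank_biSup]
  have hcard := Finset.card_filter_add_card_filter_not (s := Finset.univ)
    (fun j : Fin k => (j : ℕ) < i)
  simp only [not_lt, Finset.card_univ, Fintype.card_fin, Fin.card_filter_val_lt] at hcard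
  simp only [hL1, Finset.sum_const, smul_eq_mul, mul_one]
  omega

variable (hInt : IsInternal (Sum.elim L Lp)) (A : Fin k → E →ₗ[K] E)

noncomputable def graphShear : E →ₗ[K] E :=
  ∑ l, A l ∘ₗ hInt.proj (Sum.inl l)

theorem graphShear_apply_of_mem {j : Fin k} {v : E} (hv : v ∈ L j) :
    graphShear hInt A v = A j v := by
  rw [graphShear, LinearMap.sum_apply, Finset.sum_eq_single j]
  · simp [hInt.proj_of_mem (show v ∈ Sum.elim L Lp (.inl j) from hv)]
  · intro l _ hlj
    simp [hInt.proj_of_mem_ne (show v ∈ Sum.elim L Lp (.inl j) from hv)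
      (show Sum.inl j ≠ Sum.inl l by simpa using hlj.symm)]
  · simp

variable {A}

theorem apply_proj_mem (hA : ∀ i : Fin k, ∀ v ∈ L i, A i v ∈
      (⨆ p : Fin (k + 1), ⨆ _ : (i : ℕ) < (p : ℕ), Lp p)) (l : Fin k) (x : E) :
    A l (hInt.proj (.inl l) x) ∈
      ⨆ b ∈ Sum.inr '' {p : Fin (k + 1) | (l : ℕ) < p}, Sum.elim L Lp b := by
  rw [iSup_image]
  exact hA l _ (hInt.proj_mem (.inl l) x)

theorem graphShear_mem_iSup_inr (hA : ∀ i : Fin k, ∀ v ∈ L i, A i v ∈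
      (⨆ p : Fin (k + 1), ⨆ _ : (i : ℕ) < (p : ℕ), Lp p)) (x : E) :
    graphShear hInt A x ∈ ⨆ b ∈ Set.range Sum.inr, Sum.elim L Lp b := by
  rw [graphShear, LinearMap.sum_apply]
  exact Submodule.sum_mem _ fun l _ => SetLike.le_def.1
    (biSup_mono fun _ => (Set.image_subset_range _ _ ·)) (apply_proj_mem hInt hA l x)

theorem graphShear_eq_zero_of_mem_iSup_inr {y : E}
    (hy : y ∈ ⨆ b ∈ Set.range Sum.inr, Sum.elim L Lp b) : graphShear hInt A y = 0 := by
  have hproj (l : Fin k) : hInt.proj (.inl l) y = 0 :=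
    hInt.proj_eq_zero_of_mem_biSup (by simp) hy
  simp [graphShear, hproj]

theorem graphShear_comp_self (hA : ∀ i : Fin k, ∀ v ∈ L i, A i v ∈
      (⨆ p : Fin (k + 1), ⨆ _ : (i : ℕ) < (p : ℕ), Lp p)) :
    graphShear hInt A ∘ₗ graphShear hInt A = 0 := by
  ext x
  exact graphShear_eq_zero_of_mem_iSup_inr hInt (graphShear_mem_iSup_inr hInt hA x)

theorem graphShear_mem_iSup_blocksFrom (hA : ∀ i : Fin k, ∀ v ∈ L i, A i v ∈
      (⨆ p : Fin (k + 1), ⨆ _ : (i : ℕ) < (p : ℕ), Lp p)) {i : ℕ} {x : E}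
    (hx : x ∈ ⨆ b ∈ blocksFrom k i, Sum.elim L Lp b) :
    graphShear hInt A x ∈ ⨆ b ∈ blocksFrom k i, Sum.elim L Lp b := by
  rw [graphShear, LinearMap.sum_apply]
  refine Submodule.sum_mem _ fun l _ => ?_
  by_cases hil : i ≤ (l : ℕ)
  · refine SetLike.le_def.1 (biSup_mono ?_) (apply_proj_mem hInt hA l x)
    rintro _ ⟨p, hp, rfl⟩
    exact hil.trans (le_of_lt hp)
  · simp [hInt.proj_eq_zero_of_mem_biSup (show Sum.inl l ∉ blocksFrom k i from hil) hx]

theorem map_id_add_graphShear (j : Fin k) :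
    (L j).map (LinearMap.id + graphShear hInt A) = (L j).map (LinearMap.id + A j) := by
  rw [← Submodule.range_subtype (L j), ← LinearMap.range_comp, ← LinearMap.range_comp]
  congr 1
  ext v
  simp [graphShear_apply_of_mem hInt A v.2]

theorem iSup_map_inf_eq_map_iSup (hA : ∀ i : Fin k, ∀ v ∈ L i, A i v ∈
      (⨆ p : Fin (k + 1), ⨆ _ : (i : ℕ) < (p : ℕ), Lp p)) {i : ℕ} (hik : i ≤ k) :
    (⨆ j, (L j).map (LinearMap.id + A j)) ⊓
        ((⨆ j : Fin k, ⨆ _ : i ≤ (j : ℕ), (L j ⊔ Lp j.castSucc)) ⊔ Lp (Fin.last k)) =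
      (⨆ j : Fin k, ⨆ _ : i ≤ (j : ℕ), L j).map (LinearMap.id + graphShear hInt A) := by
  have hN := graphShear_comp_self hInt hA
  have hG : ((⨆ j : Fin k, ⨆ _ : i ≤ (j : ℕ), (L j ⊔ Lp j.castSucc)) ⊔ Lp (Fin.last k)).map
      (LinearMap.id + graphShear hInt A) =
      (⨆ j : Fin k, ⨆ _ : i ≤ (j : ℕ), (L j ⊔ Lp j.castSucc)) ⊔ Lp (Fin.last k) := by
    refine LinearMap.map_id_add_eq_of_comp_self_eq_zero hN fun x hx => ?_
    rw [iSup_blocksFrom hik] at hx ⊢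
    exact graphShear_mem_iSup_blocksFrom hInt hA hx
  simp_rw [← map_id_add_graphShear hInt, ← Submodule.map_iSup]
  rw [← hG, ← Submodule.map_inf _ (LinearMap.injective_id_add_of_comp_self_eq_zero hN),
    iSup_inf_iSup_blocksFrom hInt hik]

end Graphs

/-- With `E = ⊕_i (L_i ⊕ L_i^⊥) ⊕ G^{β_k}` (here `Lp (Fin.last k) = G^{β_k}` and
`L_j^⊥ = Lp j.castSucc`), and `A_i : L_i → Σ_{j=i+1}^{k+1} L_j^⊥` linear, the subspace
`LL = Σ_{i=1}^k Γ_{A_i}` satisfies `LL ∩ G^{β_i} = Σ_{j>i} Γ_{A_j}` where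
`G^{β_i} = Σ_{j>i} (L_j + L_j^⊥) + G^{β_k}`; in particular
`dim (LL ∩ G^{β_i}) = k - i` for all `0 ≤ i ≤ k` (for `i = k` the intersection is `0`). -/
theorem stmt_9 (k : ℕ) (E : Type*) [AddCommGroup E] [Module ℂ E] [FiniteDimensional ℂ E]
    (L : Fin k → Submodule ℂ E) (Lp : Fin (k + 1) → Submodule ℂ E)
    (hInt : DirectSum.IsInternal (Sum.elim L Lp))
    (hL1 : ∀ i, Module.finrank ℂ (L i) = 1)
    (A : Fin k → (E →ₗ[ℂ] E))
    (hA : ∀ i : Fin k, ∀ v ∈ L i, A i v ∈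
      (⨆ p : Fin (k + 1), ⨆ _ : (i : ℕ) < (p : ℕ), Lp p)) :
    ∀ i : ℕ, i ≤ k →
      ((⨆ j : Fin k, Submodule.map (LinearMap.id + A j) (L j)) ⊓
          ((⨆ j : Fin k, ⨆ _ : i ≤ (j : ℕ), (L j ⊔ Lp j.castSucc)) ⊔ Lp (Fin.last k))
        = ⨆ j : Fin k, ⨆ _ : i ≤ (j : ℕ),
            Submodule.map (LinearMap.id + A j) (L j)) ∧
      Module.finrank ℂ
        (((⨆ j : Fin k, Submodule.map (LinearMap.id + A j) (L j)) ⊓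
          ((⨆ j : Fin k, ⨆ _ : i ≤ (j : ℕ), (L j ⊔ Lp j.castSucc)) ⊔ Lp (Fin.last k))
            : Submodule ℂ E)) = k - i := by
  intro i hik
  have hinj := LinearMap.injective_id_add_of_comp_self_eq_zero (graphShear_comp_self hInt hA)
  rw [iSup_map_inf_eq_map_iSup hInt hA hik]
  refine ⟨?_, ?_⟩
  · simp_rw [Submodule.map_iSup, map_id_add_graphShear hInt]
  · rw [← finrank_iSup_ge hInt hL1 i]
    exact (Submodule.equivMapOfInjective _ hinj _).finrank_eq.symm
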